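/- Let K ∈ ℝ, N ∈ (1,∞), D > 0 (with D ≤ π√((N−1)/K) if K > 0). If h : [0,D] → ℝ is an MCP(K,N)-density with ∫₀ᴰ h(x) dx = 1, then h(x) ≥ f_{K,N,D}(x) for every x ∈ [0,D]. -/

import Mathlib

open MeasureTheory Filter

noncomputable section

/-- The comparison function `s_κ(θ)`:
`sin(√κ·θ)/√κ` if `κ > 0`, `θ` if `κ = 0`, `sinh(√(−κ)·θ)/√(−κ)` if `κ < 0`. -/
def sK (κ θ : ℝ) : ℝ :=
  if 0 < κ then Real.sin (Real.sqrt κ * θ) / Real.sqrt κ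
  else if κ = 0 then θ
  else Real.sinh (Real.sqrt (-κ) * θ) / Real.sqrt (-κ)

/-- `h` is an `MCP(K,N)`-density on the interval `I ⊆ ℝ`: it is a nonnegative Borel
function satisfying
`h(t·x₁+(1−t)·x₀) ≥ (s_{K/(N−1)}((1−t)|x₁−x₀|)/s_{K/(N−1)}(|x₁−x₀|))^{N−1}·h(x₀)`
for all `x₀, x₁ ∈ I`, `t ∈ [0,1]`; when `x₀ = x₁` the coefficient is interpreted as `1−t`,
and when `K > 0` and `|x₁−x₀| ≥ π√((N−1)/K)` the coefficient is `+∞`, forcing `h x₀ = 0`. -/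
def IsMCPDensity (K N : ℝ) (I : Set ℝ) (h : ℝ → ℝ) : Prop :=
  Measurable h ∧ (∀ x ∈ I, 0 ≤ h x) ∧
  ∀ x₀ ∈ I, ∀ x₁ ∈ I, ∀ t ∈ Set.Icc (0:ℝ) 1,
    (x₀ = x₁ → (1 - t) * h x₀ ≤ h x₀) ∧
    (x₀ ≠ x₁ →
      ((0 < K ∧ Real.pi * Real.sqrt ((N - 1) / K) ≤ |x₁ - x₀|) → h x₀ = 0) ∧
      (¬(0 < K ∧ Real.pi * Real.sqrt ((N - 1) / K) ≤ |x₁ - x₀|) →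
        (sK (K / (N - 1)) ((1 - t) * |x₁ - x₀|) / sK (K / (N - 1)) |x₁ - x₀|) ^ (N - 1) * h x₀
          ≤ h (t * x₁ + (1 - t) * x₀)))

/-- `h` is a `CD(K,N)`-density on the interval `I ⊆ ℝ`. -/
def IsCDDensity (K N : ℝ) (I : Set ℝ) (h : ℝ → ℝ) : Prop :=
  (∀ x ∈ I, 0 ≤ h x) ∧
  ∀ x₀ ∈ I, ∀ x₁ ∈ I, x₀ < x₁ → ∀ t ∈ Set.Icc (0:ℝ) 1,
    (sK (K / (N - 1)) ((1 - t) * (x₁ - x₀)) / sK (K / (N - 1)) (x₁ - x₀)) * h x₀ ^ (1 / (N - 1))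
      + (sK (K / (N - 1)) (t * (x₁ - x₀)) / sK (K / (N - 1)) (x₁ - x₀)) * h x₁ ^ (1 / (N - 1))
      ≤ h ((1 - t) * x₀ + t * x₁) ^ (1 / (N - 1))

/-- The lower-bound function `f_{K,N,D}`. -/
def fKND (K N D : ℝ) (x : ℝ) : ℝ :=
  if x = 0 ∨ x = D then 0
  else ((∫ y in (0:ℝ)..x, (sK (K / (N - 1)) (D - y) / sK (K / (N - 1)) (D - x)) ^ (N - 1)) +
        (∫ y in x..D, (sK (K / (N - 1)) y / sK (K / (N - 1)) x) ^ (N - 1)))⁻¹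

/-- The model density `h^a_{K,N,D}`. -/
def hKND (K N D a : ℝ) (x : ℝ) : ℝ :=
  if x ≤ a then fKND K N D a * (sK (K / (N - 1)) (D - x) / sK (K / (N - 1)) (D - a)) ^ (N - 1)
  else fKND K N D a * (sK (K / (N - 1)) x / sK (K / (N - 1)) a) ^ (N - 1)

/-- `v_{K,N,D}(a) = ∫₀ᵃ h^a_{K,N,D}(x) dx`. -/
def vKND (K N D a : ℝ) : ℝ := ∫ x in (0:ℝ)..a, hKND K N D a x

/-- The (outer) Minkowski content of `A` with respect to `μ`:
`liminf_{ε→0⁺} (μ(Aᵉ) − μ(A))/ε` where `Aᵉ` is the open `ε`-neighbourhood of `A`. -/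
def mink (μ : Measure ℝ) (A : Set ℝ) : ℝ :=
  Filter.liminf (fun ε : ℝ => ((μ (Metric.thickening ε A)).toReal - (μ A).toReal) / ε)
    (nhdsWithin 0 (Set.Ioi 0))

/-- The measure `μ_h = h · Leb` restricted to `[0,D]`. -/
def muh (h : ℝ → ℝ) (D : ℝ) : Measure ℝ :=
  (volume.restrict (Set.Icc (0:ℝ) D)).withDensity (fun x => ENNReal.ofReal (h x))

/-- The restricted one-dimensional isoperimetric profile `Ĩ_{K,N,D}(v)` over
`MCP(K,N)`-densities on `[0,D]` integrating to `1`. -/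
def Itilde (K N D v : ℝ) : ℝ :=
  sInf { p : ℝ | ∃ h : ℝ → ℝ, IsMCPDensity K N (Set.Icc 0 D) h ∧
    (∫ x in (0:ℝ)..D, h x) = 1 ∧
    ∃ A : Set ℝ, MeasurableSet A ∧ A ⊆ Set.Icc 0 D ∧ (muh h D A).toReal = v ∧
      p = mink (muh h D) A }

/-- The restricted one-dimensional isoperimetric profile `Ĩ^{CD}_{K,N,D}(v)` over
`CD(K,N)`-densities on `[0,D]` integrating to `1`. -/
def ItildeCD (K N D v : ℝ) : ℝ :=
  sInf { p : ℝ | ∃ h : ℝ → ℝ, IsCDDensity K N (Set.Icc 0 D) h ∧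
    (∫ x in (0:ℝ)..D, h x) = 1 ∧
    ∃ A : Set ℝ, MeasurableSet A ∧ A ⊆ Set.Icc 0 D ∧ (muh h D A).toReal = v ∧
      p = mink (muh h D) A }

/-!
Fix `0 < x < D`. Applying the MCP inequality along the segment from a point `y < x` to the
endpoint `D` (and from `y > x` to the endpoint `0`) bounds `h y` by `h x` times the ratio of
comparison functions appearing in `f_{K,N,D}`. Integrating these bounds over `[0, D]` gives
`1 ≤ h x / f_{K,N,D}(x)`.
-/

open MeasureTheory Set Real

section ComparisonFunction

variable {κ θ : ℝ}

theorem sK_pos (hθ : 0 < θ) (hκ : 0 < κ → √κ * θ < π) : 0 < sK κ θ := by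
  unfold sK
  split_ifs with hpos hzero
  · exact div_pos (sin_pos_of_pos_of_lt_pi (by positivity) (hκ hpos)) (sqrt_pos.2 hpos)
  · exact hθ
  · have hneg : 0 < -κ := neg_pos.2 ((not_lt.1 hpos).lt_of_ne hzero)
    exact div_pos (sinh_pos_iff.2 (by positivity)) (sqrt_pos.2 hneg)

theorem sK_nonneg (hθ : 0 ≤ θ) (hκ : 0 < κ → √κ * θ ≤ π) : 0 ≤ sK κ θ := by
  unfold sK
  split_ifs with hpos
  · exact div_nonneg (sin_nonneg_of_nonneg_of_le_pi (by positivity) (hκ hpos)) (sqrt_nonneg κ)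
  · exact hθ
  · exact div_nonneg (sinh_nonneg_iff.2 (by positivity)) (sqrt_nonneg _)

theorem continuous_sK (κ : ℝ) : Continuous (sK κ) := by
  unfold sK
  split_ifs <;> fun_prop

end ComparisonFunction

theorem sqrt_div_mul_pi_mul_sqrt_div {a b : ℝ} (hab : 0 < a / b) :
    √(a / b) * (π * √(b / a)) = π := by
  have hba : 0 < b / a := by rw [← inv_div]; exact inv_pos.2 hab
  rw [← inv_div b a, sqrt_inv]
  field_simp [(sqrt_pos.2 hba).ne']

theorem sqrt_div_mul_le_pi {a b d : ℝ} (hab : 0 < a / b) (hd : d ≤ π * √(b / a)) :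
    √(a / b) * d ≤ π :=
  sqrt_div_mul_pi_mul_sqrt_div hab ▸ mul_le_mul_of_nonneg_left hd (sqrt_nonneg _)

theorem sqrt_div_mul_lt_pi {a b d : ℝ} (hab : 0 < a / b) (hd : d < π * √(b / a)) :
    √(a / b) * d < π :=
  sqrt_div_mul_pi_mul_sqrt_div hab ▸ mul_lt_mul_of_pos_left hd (sqrt_pos.2 hab)

theorem pos_of_div_pos_of_one_lt {K N : ℝ} (hN : 1 < N) (hK : 0 < K / (N - 1)) : 0 < K :=
  (div_pos_iff_of_pos_right (by linarith)).1 hK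

namespace IsMCPDensity

variable {K N : ℝ} {h : ℝ → ℝ}

theorem le_rpow_mul {I : Set ℝ} (hh : IsMCPDensity K N I h) (hN : 1 < N)
    {x₀ x₁ t : ℝ} (hx₀ : x₀ ∈ I) (hx₁ : x₁ ∈ I) (hne : x₀ ≠ x₁) (ht : t ∈ Icc (0 : ℝ) 1)
    (hs : 0 < sK (K / (N - 1)) ((1 - t) * |x₁ - x₀|))
    (hs₀ : 0 ≤ sK (K / (N - 1)) |x₁ - x₀|) (hz : 0 ≤ h (t * x₁ + (1 - t) * x₀)) :
    h x₀ ≤ (sK (K / (N - 1)) |x₁ - x₀| / sK (K / (N - 1)) ((1 - t) * |x₁ - x₀|)) ^ (N - 1)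
      * h (t * x₁ + (1 - t) * x₀) := by
  obtain ⟨hcut, hmcp⟩ := (hh.2.2 x₀ hx₀ x₁ hx₁ t ht).2 hne
  by_cases hfar : 0 < K ∧ π * √((N - 1) / K) ≤ |x₁ - x₀|
  · rw [hcut hfar]
    exact mul_nonneg (rpow_nonneg (div_nonneg hs₀ hs.le) _) hz
  have hs₀ : 0 < sK (K / (N - 1)) |x₁ - x₀| :=
    sK_pos (abs_pos.2 (sub_ne_zero.2 hne.symm)) fun hκ =>
      sqrt_div_mul_lt_pi hκ (not_le.1 fun hle => hfar ⟨pos_of_div_pos_of_one_lt hN hκ, hle⟩)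
  have hratio := div_pos hs hs₀
  rw [← inv_div, inv_rpow hratio.le, le_inv_mul_iff₀ (rpow_pos_of_pos hratio _)]
  exact hmcp hfar

variable {D : ℝ} (hh : IsMCPDensity K N (Icc 0 D) h) (hN : 1 < N)
  (hκD : 0 < K / (N - 1) → √(K / (N - 1)) * D ≤ π)
include hh hN hκD

theorem le_rpow_mul_of_le {x y : ℝ} (hy : 0 ≤ y) (hyx : y ≤ x) (hx : 0 < x) (hxD : x < D) :
    h y ≤ (sK (K / (N - 1)) (D - y) / sK (K / (N - 1)) (D - x)) ^ (N - 1) * h x := by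
  have hDy : 0 < D - y := by linarith
  set t := (x - y) / (D - y) with ht
  have hdist : |D - y| = D - y := abs_of_pos hDy
  have hrest : (1 - t) * (D - y) = D - x := by rw [ht]; field_simp; ring
  have hpt : t * D + (1 - t) * y = x := by linear_combination -hrest
  have key := hh.le_rpow_mul hN (x₀ := y) (x₁ := D) (t := t) ⟨hy, by linarith⟩
    ⟨by linarith, le_rfl⟩ (by linarith : y < D).ne
    ⟨div_nonneg (by linarith) hDy.le, div_le_one_of_le₀ (by linarith) hDy.le⟩
    (by
      rw [hdist, hrest]
      exact sK_pos (by linarith) fun hκ =>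
        (mul_lt_mul_of_pos_left (by linarith) (sqrt_pos.2 hκ)).trans_le (hκD hκ))
    (by
      rw [hdist]
      exact sK_nonneg hDy.le fun hκ =>
        (mul_le_mul_of_nonneg_left (by linarith) (sqrt_nonneg _)).trans (hκD hκ))
    (by rw [hpt]; exact hh.2.1 x ⟨by linarith, hxD.le⟩)
  rwa [hdist, hrest, hpt] at key

theorem le_rpow_mul_of_ge {x y : ℝ} (hx : 0 < x) (hxD : x < D) (hxy : x ≤ y) (hyD : y ≤ D) :
    h y ≤ (sK (K / (N - 1)) y / sK (K / (N - 1)) x) ^ (N - 1) * h x := by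
  have hy : 0 < y := hx.trans_le hxy
  set t := (y - x) / y with ht
  have hdist : |0 - y| = y := by rw [zero_sub, abs_neg, abs_of_pos hy]
  have hrest : (1 - t) * y = x := by rw [ht]; field_simp; ring
  have hpt : t * 0 + (1 - t) * y = x := by rw [mul_zero, zero_add, hrest]
  have key := hh.le_rpow_mul hN (x₀ := y) (x₁ := 0) (t := t) ⟨hy.le, hyD⟩
    ⟨le_rfl, hy.le.trans hyD⟩ hy.ne'
    ⟨div_nonneg (by linarith) hy.le, div_le_one_of_le₀ (by linarith) hy.le⟩
    (by
      rw [hdist, hrest]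
      exact sK_pos hx fun hκ =>
        (mul_lt_mul_of_pos_left (by linarith) (sqrt_pos.2 hκ)).trans_le (hκD hκ))
    (by
      rw [hdist]
      exact sK_nonneg hy.le fun hκ =>
        (mul_le_mul_of_nonneg_left hyD (sqrt_nonneg _)).trans (hκD hκ))
    (by rw [hpt]; exact hh.2.1 x ⟨hx.le, by linarith⟩)
  rwa [hdist, hpt, hrest] at key

end IsMCPDensity

theorem integral_le_add_mul_of_le_mul {f g₁ g₂ : ℝ → ℝ} {a x b c : ℝ} (hax : a ≤ x) (hxb : x ≤ b)
    (hf : IntervalIntegrable f volume a b) (hg₁ : IntervalIntegrable g₁ volume a x)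
    (hg₂ : IntervalIntegrable g₂ volume x b)
    (h₁ : ∀ y ∈ Icc a x, f y ≤ g₁ y * c) (h₂ : ∀ y ∈ Icc x b, f y ≤ g₂ y * c) :
    ∫ y in a..b, f y ≤ ((∫ y in a..x, g₁ y) + ∫ y in x..b, g₂ y) * c := by
  have hf₁ : IntervalIntegrable f volume a x := hf.mono_set (uIcc_subset_uIcc_left (by
    rw [uIcc_of_le (hax.trans hxb)]; exact ⟨hax, hxb⟩))
  have hf₂ : IntervalIntegrable f volume x b := hf.mono_set (uIcc_subset_uIcc_right (by
    rw [uIcc_of_le (hax.trans hxb)]; exact ⟨hax, hxb⟩))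
  rw [← intervalIntegral.integral_add_adjacent_intervals hf₁ hf₂, add_mul,
    ← intervalIntegral.integral_mul_const, ← intervalIntegral.integral_mul_const]
  exact add_le_add (intervalIntegral.integral_mono_on hax hf₁ (hg₁.mul_const c) h₁)
    (intervalIntegral.integral_mono_on hxb hf₂ (hg₂.mul_const c) h₂)

theorem fKND_le_mcp_density_general (K N D : ℝ) (hN : 1 < N)
    (hDK : 0 < K → D ≤ Real.pi * Real.sqrt ((N - 1) / K))
    (h : ℝ → ℝ) (hMCP : IsMCPDensity K N (Set.Icc 0 D) h)
    (hint : (∫ x in (0:ℝ)..D, h x) = 1) :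
    ∀ x ∈ Set.Icc (0:ℝ) D, fKND K N D x ≤ h x := by
  intro x hx
  have hhx := hMCP.2.1 x hx
  rcases hx.1.eq_or_lt with rfl | hx0
  · simpa [fKND] using hhx
  rcases hx.2.eq_or_lt with rfl | hxD
  · simpa [fKND] using hhx
  have hκD : 0 < K / (N - 1) → √(K / (N - 1)) * D ≤ π := fun hκ =>
    sqrt_div_mul_le_pi hκ (hDK (pos_of_div_pos_of_one_lt hN hκ))
  have hexp : 0 ≤ N - 1 := by linarith
  have hg₁ : Continuous fun y => (sK (K / (N - 1)) (D - y) / sK (K / (N - 1)) (D - x)) ^ (N - 1) :=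
    (((continuous_sK _).comp (continuous_const.sub continuous_id)).div_const _).rpow_const
      fun _ => Or.inr hexp
  have hg₂ : Continuous fun y => (sK (K / (N - 1)) y / sK (K / (N - 1)) x) ^ (N - 1) :=
    ((continuous_sK _).div_const _).rpow_const fun _ => Or.inr hexp
  have hbound := integral_le_add_mul_of_le_mul hx0.le hxD.le
    (intervalIntegral.intervalIntegrable_of_integral_ne_zero (hint ▸ one_ne_zero))
    (hg₁.intervalIntegrable _ _) (hg₂.intervalIntegrable _ _)
    (fun y hy => hMCP.le_rpow_mul_of_le hN hκD hy.1 hy.2 hx0 hxD)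
    (fun y hy => hMCP.le_rpow_mul_of_ge hN hκD hx0 hxD hy.1 hy.2)
  rw [hint] at hbound
  rw [fKND, if_neg (by rintro (rfl | rfl) <;> linarith)]
  have hsum_pos := pos_of_mul_pos_left (one_pos.trans_le hbound) hhx
  rwa [inv_le_iff_one_le_mul₀ hsum_pos, mul_comm]

/-- Proposition (Lower bound), point (iii): any `MCP(K,N)`-density on `[0,D]`
integrating to `1` dominates `f_{K,N,D}` pointwise. -/
theorem fKND_le_mcp_density (K N D : ℝ) (hN : 1 < N) (hD : 0 < D)
    (hDK : 0 < K → D ≤ Real.pi * Real.sqrt ((N - 1) / K))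
    (h : ℝ → ℝ) (hMCP : IsMCPDensity K N (Set.Icc 0 D) h)
    (hint : (∫ x in (0:ℝ)..D, h x) = 1) :
    ∀ x ∈ Set.Icc (0:ℝ) D, fKND K N D x ≤ h x :=
  fKND_le_mcp_density_general K N D hN hDK h hMCP hint

end
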